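/- Let d ≥ 1 and equip ℝ^d with the sup norm ‖v‖∞ = max_i |v_i|. Let α, β > 0 satisfy α·(5β + 6) ≤ 2 and let φ ∈ [0,1]. For k = 1, 2, let f_z^k, f_r^k, f_c^k : ℝ^d → ℝ^d be 1-Lipschitz maps, and define h^k(x) = (α·σ(f_z^k(x))) ⊙ (tanh(f_c^k((β·σ(f_r^k(x))) ⊙ x)) − x), where σ(u) = 1/(1 + exp(−u)) and tanh are applied coordinatewise. Let g : ℝ^d → ℝ^d be a 1-Lipschitz map that sends the closed unit ball {x : ‖x‖∞ ≤ 1} into itself. Then the map F(x) = x + φ·(h¹(x) ⊙ h²(g(x))) is injective on the closed unit ball {x ∈ ℝ^d : ‖x‖∞ ≤ 1}. -/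

import Mathlib

/-- The logistic (sigmoid) function. -/
noncomputable def sigmoid (u : ℝ) : ℝ := 1 / (1 + Real.exp (-u))

/-- The GRU-flow update `h(x) = z(x) ⊙ (c(x) − x)` with
`z(x) = α·σ(f_z(x))`, `r(x) = β·σ(f_r(x))`, `c(x) = tanh(f_c(r(x) ⊙ x))`,
where `σ` and `tanh` act coordinatewise and `⊙` is the coordinatewise product. -/
noncomputable def gruH {d : ℕ} (α β : ℝ) (fz fr fc : (Fin d → ℝ) → (Fin d → ℝ))
    (x : Fin d → ℝ) : Fin d → ℝ :=
  fun i =>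
    (α * sigmoid (fz x i)) *
      (Real.tanh (fc (fun j => (β * sigmoid (fr x j)) * x j) i) - x i)

open NNReal Metric

/-! On the sup-norm unit ball each factor `h^k` is bounded by `2α` and Lipschitz with constant
`L = α(5β + 6)/4 ≤ 1/2`: `σ` is `1/4`-Lipschitz, `tanh x = 2σ(2x) − 1` is `1`-Lipschitz, and
`(Fin d → ℝ, ‖·‖∞)` is a normed ring whose product is the Hadamard product, so the usual
product rule for Lipschitz constants of bounded maps applies. The perturbation
`φ · h¹(x) ⊙ h²(g x)` is therefore `φ · 4αL ≤ 2α < 1`-Lipschitz on the ball, and the identity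
plus a contraction is injective. -/

theorem sigmoid_eq_real_sigmoid : sigmoid = Real.sigmoid :=
  funext fun _ => one_div _

theorem Real.lipschitzWith_sigmoid : LipschitzWith (1 / 4) Real.sigmoid := by
  refine lipschitzWith_of_nnnorm_deriv_le differentiable_sigmoid fun x => ?_
  rw [Real.deriv_sigmoid, ← NNReal.coe_le_coe, coe_nnnorm, Real.norm_eq_abs,
    abs_of_nonneg (mul_nonneg (Real.sigmoid_nonneg x) (sub_nonneg.2 (Real.sigmoid_le_one x)))]
  push_cast
  nlinarith [sq_nonneg (Real.sigmoid x - 1 / 2)]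

theorem Real.tanh_eq_two_mul_sigmoid_sub_one (x : ℝ) :
    Real.tanh x = 2 * Real.sigmoid (2 * x) - 1 := by
  have hx : Real.exp (-(2 * x)) = Real.exp (-x) ^ 2 := by
    rw [← Real.exp_nat_mul]; ring_nf
  have h1 : Real.exp x * Real.exp (-x) = 1 := by rw [← Real.exp_add]; simp
  rw [Real.tanh_eq_sinh_div_cosh, Real.sinh_eq, Real.cosh_eq, Real.sigmoid_def, hx]
  field_simp
  linear_combination 2 * Real.exp (-x) * h1

theorem Real.lipschitzWith_tanh : LipschitzWith 1 Real.tanh :=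
  LipschitzWith.of_dist_le_mul fun a b => by
    have h := Real.lipschitzWith_sigmoid.dist_le_mul (2 * a) (2 * b)
    simp only [Real.dist_eq, Real.tanh_eq_two_mul_sigmoid_sub_one] at h ⊢
    calc |2 * Real.sigmoid (2 * a) - 1 - (2 * Real.sigmoid (2 * b) - 1)|
        = 2 * |Real.sigmoid (2 * a) - Real.sigmoid (2 * b)| := by
          rw [← abs_two, ← abs_mul, abs_two]; ring_nf
      _ ≤ 2 * (1 / 4 * |2 * a - 2 * b|) := by gcongr; exact_mod_cast h
      _ = ↑(1 : ℝ≥0) * |a - b| := by rw [← mul_sub, abs_mul, abs_two]; push_cast; ring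

section Coordinatewise

variable {ι : Type*} [Fintype ι]

theorem LipschitzWith.comp_left_pi {α β : Type*} [PseudoEMetricSpace α] [PseudoEMetricSpace β]
    {K : ℝ≥0} {f : α → β} (hf : LipschitzWith K f) :
    LipschitzWith K fun v : ι → α => f ∘ v := fun v w =>
  edist_pi_le_iff.2 fun i =>
    (hf.edist_le_mul _ _).trans (by gcongr; exact edist_le_pi_edist v w i)

theorem pi_norm_comp_le_of_forall_norm_le {α E : Type*} [SeminormedAddGroup E] {f : α → E}
    {C : ℝ} (hC : 0 ≤ C) (hf : ∀ a, ‖f a‖ ≤ C) (v : ι → α) : ‖f ∘ v‖ ≤ C :=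
  (pi_norm_le_iff_of_nonneg hC).2 fun i => hf (v i)

theorem norm_tanh_comp_sub_le {x : ι → ℝ} (hx : ‖x‖ ≤ 1) (v : ι → ℝ) :
    ‖Real.tanh ∘ v - x‖ ≤ 2 := by
  have hc : ‖Real.tanh ∘ v‖ ≤ 1 := pi_norm_comp_le_of_forall_norm_le zero_le_one
    (fun u => (Real.abs_tanh_lt_one u).le) v
  linarith [norm_sub_le (Real.tanh ∘ v) x]

noncomputable def sigmoidGate {E : Type*} (c : ℝ) (f : E → ι → ℝ) (x : E) : ι → ℝ :=
  c • (sigmoid ∘ f x)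

theorem lipschitzWith_sigmoidGate {E : Type*} [PseudoMetricSpace E] (c : ℝ≥0)
    {f : E → ι → ℝ} (hf : LipschitzWith 1 f) : LipschitzWith (c / 4) (sigmoidGate c f) := by
  have h := (lipschitzWith_smul (c : ℝ)).comp
    ((sigmoid_eq_real_sigmoid ▸ Real.lipschitzWith_sigmoid).comp_left_pi.comp hf)
  rwa [nnnorm_eq, mul_one, ← div_eq_mul_one_div] at h

theorem norm_sigmoidGate_le {E : Type*} (c : ℝ≥0) (f : E → ι → ℝ) (x : E) :
    ‖sigmoidGate c f x‖ ≤ c := by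
  have hσ : ∀ u, ‖sigmoid u‖ ≤ 1 := fun u => by
    rw [sigmoid_eq_real_sigmoid, Real.norm_of_nonneg (Real.sigmoid_nonneg u)]
    exact Real.sigmoid_le_one u
  rw [sigmoidGate, norm_smul, norm_eq]
  exact mul_le_of_le_one_right c.2 (pi_norm_comp_le_of_forall_norm_le zero_le_one hσ _)

end Coordinatewise

theorem LipschitzOnWith.mul_of_norm_le {α R : Type*} [PseudoMetricSpace α] [SeminormedRing R]
    {f g : α → R} {s : Set α} {Kf Kg Bf Bg : ℝ≥0}
    (hf : LipschitzOnWith Kf f s) (hg : LipschitzOnWith Kg g s)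
    (hfB : ∀ x ∈ s, ‖f x‖ ≤ Bf) (hgB : ∀ x ∈ s, ‖g x‖ ≤ Bg) :
    LipschitzOnWith (Kf * Bg + Bf * Kg) (fun x => f x * g x) s := by
  refine LipschitzOnWith.of_dist_le_mul fun x hx y hy => ?_
  have hfd := hf.dist_le_mul x hx y hy
  have hgd := hg.dist_le_mul x hx y hy
  rw [dist_eq_norm] at hfd hgd ⊢
  calc ‖f x * g x - f y * g y‖ = ‖(f x - f y) * g x + f y * (g x - g y)‖ := by noncomm_ring
    _ ≤ ‖f x - f y‖ * ‖g x‖ + ‖f y‖ * ‖g x - g y‖ :=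
      (norm_add_le _ _).trans (add_le_add (norm_mul_le _ _) (norm_mul_le _ _))
    _ ≤ Kf * dist x y * Bg + Bf * (Kg * dist x y) := by
      gcongr
      exacts [hgB x hx, hfB y hy]
    _ = ↑(Kf * Bg + Bf * Kg) * dist x y := by push_cast; ring

theorem LipschitzOnWith.injOn_id_add {E : Type*} [NormedAddCommGroup E] {G : E → E} {s : Set E}
    {K : ℝ≥0} (hG : LipschitzOnWith K G s) (hK : K < 1) : Set.InjOn (fun x => x + G x) s := by
  intro x hx y hy hxy
  have hdist : ‖x - y‖ ≤ K * ‖x - y‖ := by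
    calc ‖x - y‖ = ‖G y - G x‖ := by
          rw [sub_eq_sub_iff_add_eq_add.2 (by rw [add_comm (G y)]; exact hxy)]
      _ ≤ K * ‖y - x‖ := (lipschitzOnWith_iff_norm_sub_le.1 hG) hy hx
      _ = K * ‖x - y‖ := by rw [norm_sub_rev]
  have hK' : (K : ℝ) < 1 := by exact_mod_cast hK
  have : ‖x - y‖ = 0 := by nlinarith [norm_nonneg (x - y)]
  exact sub_eq_zero.1 (norm_eq_zero.1 this)

section GRU

variable {d : ℕ} {fz fr fc : (Fin d → ℝ) → (Fin d → ℝ)}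

theorem gruH_eq (α β : ℝ) (x : Fin d → ℝ) :
    gruH α β fz fr fc x =
      sigmoidGate α fz x * (Real.tanh ∘ fc (sigmoidGate β fr x * x) - x) :=
  rfl

theorem norm_gruH_le (α : ℝ≥0) (β : ℝ) {x : Fin d → ℝ} (hx : ‖x‖ ≤ 1) :
    ‖gruH α β fz fr fc x‖ ≤ 2 * α := by
  rw [gruH_eq]
  calc _ ≤ ‖sigmoidGate α fz x‖ * ‖Real.tanh ∘ fc (sigmoidGate β fr x * x) - x‖ :=
        norm_mul_le _ _
    _ ≤ α * 2 := by
      gcongr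
      exacts [norm_sigmoidGate_le α fz x, norm_tanh_comp_sub_le hx _]
    _ = 2 * α := mul_comm _ _

theorem lipschitzOnWith_gruH (α β : ℝ≥0) (hfz : LipschitzWith 1 fz) (hfr : LipschitzWith 1 fr)
    (hfc : LipschitzWith 1 fc) :
    LipschitzOnWith (α * (5 * β + 6) / 4) (gruH α β fz fr fc) (closedBall 0 1) := by
  have hball : ∀ x ∈ closedBall (0 : Fin d → ℝ) 1, ‖x‖ ≤ (1 : ℝ≥0) := fun x hx => by
    simpa using hx
  have hrx : LipschitzOnWith (β / 4 * 1 + β * 1) (fun x => sigmoidGate β fr x * x)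
      (closedBall 0 1) :=
    (lipschitzWith_sigmoidGate β hfr).lipschitzOnWith.mul_of_norm_le
      LipschitzWith.id.lipschitzOnWith (fun x _ => norm_sigmoidGate_le β fr x) hball
  have hc : LipschitzOnWith (1 * (1 * (β / 4 * 1 + β * 1)))
      (fun x => Real.tanh ∘ fc (sigmoidGate β fr x * x)) (closedBall 0 1) :=
    Real.lipschitzWith_tanh.comp_left_pi.comp_lipschitzOnWith (hfc.comp_lipschitzOnWith hrx)
  have hz := (lipschitzWith_sigmoidGate α hfz).lipschitzOnWith (s := closedBall 0 1)
  refine (hz.mul_of_norm_le (hc.sub LipschitzWith.id.lipschitzOnWith) (Bf := α) (Bg := 2)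
    (fun x _ => norm_sigmoidGate_le α fz x)
    (fun x hx => by exact_mod_cast norm_tanh_comp_sub_le (hball x hx) _)).weaken (le_of_eq ?_)
  ring

end GRU

theorem gru_flow_injective_on_unit_ball_general {d : ℕ} (α β : ℝ)
    (hα : 0 < α) (hβ : 0 < β) (hαβ : α * (5 * β + 6) ≤ 2)
    (φ : ℝ) (hφ : φ ∈ Set.Icc (0 : ℝ) 1)
    (fz1 fr1 fc1 fz2 fr2 fc2 : (Fin d → ℝ) → (Fin d → ℝ))
    (hfz1 : LipschitzWith 1 fz1) (hfr1 : LipschitzWith 1 fr1) (hfc1 : LipschitzWith 1 fc1)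
    (hfz2 : LipschitzWith 1 fz2) (hfr2 : LipschitzWith 1 fr2) (hfc2 : LipschitzWith 1 fc2)
    (g : (Fin d → ℝ) → (Fin d → ℝ)) (hg : LipschitzWith 1 g)
    (hgball : ∀ x : Fin d → ℝ, ‖x‖ ≤ 1 → ‖g x‖ ≤ 1) :
    Set.InjOn
      (fun x : Fin d → ℝ =>
        x + φ • fun i => gruH α β fz1 fr1 fc1 x i * gruH α β fz2 fr2 fc2 (g x) i)
      {x : Fin d → ℝ | ‖x‖ ≤ 1} := by
  obtain ⟨hφ0, hφ1⟩ := hφ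
  lift α to ℝ≥0 using hα.le
  lift β to ℝ≥0 using hβ.le
  lift φ to ℝ≥0 using hφ0
  set L := α * (5 * β + 6) / 4
  have hgmaps : Set.MapsTo g (closedBall 0 1) (closedBall 0 1) := fun x hx =>
    mem_closedBall_zero_iff.2 (hgball x (mem_closedBall_zero_iff.1 hx))
  have hprod : LipschitzOnWith (L * (2 * α) + 2 * α * (L * 1))
      (fun x => gruH α β fz1 fr1 fc1 x * gruH α β fz2 fr2 fc2 (g x)) (closedBall 0 1) :=
    (lipschitzOnWith_gruH α β hfz1 hfr1 hfc1).mul_of_norm_le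
      ((lipschitzOnWith_gruH α β hfz2 hfr2 hfc2).comp hg.lipschitzOnWith hgmaps)
      (fun x hx => by exact_mod_cast norm_gruH_le α β (mem_closedBall_zero_iff.1 hx))
      (fun x hx => by exact_mod_cast norm_gruH_le α β (mem_closedBall_zero_iff.1 (hgmaps hx)))
  have hK : ‖(φ : ℝ)‖₊ * (L * (2 * α) + 2 * α * (L * 1)) < 1 := by
    rw [nnnorm_eq, ← NNReal.coe_lt_coe]
    have hα3 : (α : ℝ) < 1 / 3 := by nlinarith [mul_pos hα hβ]
    calc (φ : ℝ) * ↑(L * (2 * α) + 2 * α * (L * 1)) = φ * α * (α * (5 * β + 6)) := by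
          push_cast [L]; ring
      _ ≤ 1 * α * 2 := by gcongr
      _ < 1 := by linarith
  have hs : {x : Fin d → ℝ | ‖x‖ ≤ 1} = closedBall 0 1 := by
    ext x; exact mem_closedBall_zero_iff.symm
  rw [hs]
  exact ((lipschitzWith_smul (φ : ℝ)).comp_lipschitzOnWith hprod).injOn_id_add hK

/-- Invertibility of the graph-conditioned GRU flow: if `α(5β + 6) ≤ 2`, `φ ∈ [0,1]`,
the maps `f_z^k, f_r^k, f_c^k` are `1`-Lipschitz, and the graph encoder `g` is
`1`-Lipschitz and maps the closed sup-norm unit ball into itself, then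
`F(x) = x + φ·(h¹(x) ⊙ h²(g(x)))` is injective on the closed unit ball. -/
theorem gru_flow_injective_on_unit_ball {d : ℕ} (hd : 1 ≤ d) (α β : ℝ)
    (hα : 0 < α) (hβ : 0 < β) (hαβ : α * (5 * β + 6) ≤ 2)
    (φ : ℝ) (hφ : φ ∈ Set.Icc (0 : ℝ) 1)
    (fz1 fr1 fc1 fz2 fr2 fc2 : (Fin d → ℝ) → (Fin d → ℝ))
    (hfz1 : LipschitzWith 1 fz1) (hfr1 : LipschitzWith 1 fr1) (hfc1 : LipschitzWith 1 fc1)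
    (hfz2 : LipschitzWith 1 fz2) (hfr2 : LipschitzWith 1 fr2) (hfc2 : LipschitzWith 1 fc2)
    (g : (Fin d → ℝ) → (Fin d → ℝ)) (hg : LipschitzWith 1 g)
    (hgball : ∀ x : Fin d → ℝ, ‖x‖ ≤ 1 → ‖g x‖ ≤ 1) :
    Set.InjOn
      (fun x : Fin d → ℝ =>
        x + φ • fun i => gruH α β fz1 fr1 fc1 x i * gruH α β fz2 fr2 fc2 (g x) i)
      {x : Fin d → ℝ | ‖x‖ ≤ 1} :=
  gru_flow_injective_on_unit_ball_general α β hα hβ hαβ φ hφ fz1 fr1 fc1 fz2 fr2 fc2 hfz1 hfr1 hfc1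
    hfz2 hfr2 hfc2 g hg hgball
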